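/- arXiv:1707.04777 — 2 statements merged into one kernel-verified Lean document; each statement's English description precedes it below -/
import Mathlib

section
/- Let A be a unital C*-algebra, τ a continuous linear functional that is tracial, positive, and faithful, and δ₁, δ₂, δ₃, δ₄ continuous ℂ-linear τ-invariant *-derivations (δᵢ(x*) = (δᵢ(x))*). For self-adjoint h ∈ A define R := π² Σᵢ₌₁⁴ ( −e^{−h}·δᵢ(δᵢ(e^h))·e^{−h} + (3/2)·e^{−h}·δᵢ(e^h)·e^{−h}·δᵢ(e^h)·e^{−h} ). Then τ(R) is a nonpositive real number, and τ(R) = 0 if and only if δᵢ(e^h) = 0 for all i = 1, …, 4. -/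
/-!
Write `u = e^h`, `w = e^{-h} = u⁻¹` and `δ = δᵢ`. Differentiating `w u = 1` gives
`δ w = -w δ(u) w`, and integrating by parts, `0 = τ(δ(w² δu))`, together with the trace property
turns the second-order term into a first-order one: `τ(w δ²(u) w) = 2 τ(w δu w δu w)`. Hence each
summand of `τ(R)` equals `-(π²/2) τ(w δu w δu w)`. With `v = e^{-h/2}` self-adjoint and
`δu` self-adjoint, `w δu w δu w = x* x` for `x = v δu w`, so positivity of `τ` gives `τ(R) ≤ 0`,
faithfulness gives `x = 0` when `τ(R) = 0`, and `x = 0 ↔ δu = 0` since `v` and `w` are units.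
-/

open NormedSpace ComplexOrder

section Leibniz

variable {A : Type*} [Ring A] {δ : A → A}

theorem map_one_of_leibniz (hδ : ∀ x y, δ (x * y) = δ x * y + x * δ y) : δ 1 = 0 := by
  simpa using hδ 1 1

theorem map_inverse_of_leibniz (hδ : ∀ x y, δ (x * y) = δ x * y + x * δ y) {u w : A}
    (hwu : w * u = 1) (huw : u * w = 1) : δ w = -(w * δ u * w) := by
  have h : δ w * u = -(w * δ u) := eq_neg_of_add_eq_zero_left <| by
    rw [← hδ, hwu, map_one_of_leibniz hδ]
  calc δ w = δ w * u * w := by rw [mul_assoc, huw, mul_one]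
    _ = -(w * δ u * w) := by rw [h, neg_mul]

variable {M F : Type*} [AddCommGroup M] [FunLike F A M] [AddMonoidHomClass F A M] {τ : F}

theorem trace_conj_leibniz_leibniz (hδ : ∀ x y, δ (x * y) = δ x * y + x * δ y)
    (hτ : ∀ x y, τ (x * y) = τ (y * x)) (hτδ : ∀ x, τ (δ x) = 0) {u w : A}
    (hwu : w * u = 1) (huw : u * w = 1) :
    τ (w * δ (δ u) * w) = 2 • τ (w * δ u * w * δ u * w) := by
  have hparts := hτδ (w * (w * δ u))
  rw [hδ, hδ, map_inverse_of_leibniz hδ hwu huw] at hparts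
  simp only [mul_add, map_add, neg_mul, mul_neg, map_neg, mul_assoc] at hparts
  have e₁ : τ (w * (δ u * (w * (w * δ u)))) = τ (w * δ u * w * δ u * w) := by
    simpa only [mul_assoc] using hτ (w * δ u * w) (w * δ u)
  have e₂ : τ (w * (w * (δ u * (w * δ u)))) = τ (w * δ u * w * δ u * w) := by
    simpa only [mul_assoc] using hτ w (w * δ u * w * δ u)
  have e₃ : τ (w * δ (δ u) * w) = τ (w * (w * δ (δ u))) := by
    simpa only [mul_assoc] using hτ (w * δ (δ u)) w
  rw [e₁, e₂] at hparts
  rw [e₃, two_nsmul, ← sub_eq_zero, ← hparts]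
  abel

theorem trace_curvature_summand {𝕜 G : Type*} [Field 𝕜] [NeZero (2 : 𝕜)] [Module 𝕜 A]
    [FunLike G A 𝕜] [LinearMapClass G 𝕜 A 𝕜] {τ : G}
    (hδ : ∀ x y, δ (x * y) = δ x * y + x * δ y)
    (hτ : ∀ x y, τ (x * y) = τ (y * x)) (hτδ : ∀ x, τ (δ x) = 0) {u w : A}
    (hwu : w * u = 1) (huw : u * w = 1) :
    τ (-(w * δ (δ u) * w) + (3 / 2 : 𝕜) • (w * δ u * w * δ u * w)) =
      -(2⁻¹ * τ (w * δ u * w * δ u * w)) := by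
  rw [map_add, map_neg, map_smul, trace_conj_leibniz_leibniz hδ hτ hτδ hwu huw, two_nsmul,
    smul_eq_mul]
  field_simp
  ring

end Leibniz

theorem IsSelfAdjoint.star_conj_mul_conj {A : Type*} [Semigroup A] [StarMul A] {a v w : A}
    (ha : IsSelfAdjoint a) (hv : IsSelfAdjoint v) (hvw : v * v = w) :
    star (v * a * w) * (v * a * w) = w * a * w * a * w := by
  subst hvw
  simp only [star_mul, ha.star_eq, hv.star_eq, mul_assoc]

theorem Finset.sum_map_star_mul_self_eq_zero_iff {A R F ι : Type*} [MulZeroClass A] [Star A]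
    [AddCommMonoid R] [PartialOrder R] [IsOrderedAddMonoid R] [FunLike F A R]
    [ZeroHomClass F A R] {τ : F} (hpos : ∀ x, 0 ≤ τ (star x * x))
    (hfaithful : ∀ x, τ (star x * x) = 0 → x = 0) (s : Finset ι) (x : ι → A) :
    ∑ i ∈ s, τ (star (x i) * x i) = 0 ↔ ∀ i ∈ s, x i = 0 := by
  rw [Finset.sum_eq_zero_iff_of_nonneg fun i _ ↦ hpos (x i)]
  refine forall₂_congr fun i _ ↦ ⟨hfaithful (x i), fun hx ↦ ?_⟩
  rw [hx, mul_zero, map_zero]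

section Exp

variable {A : Type*} [NormedRing A] [NormedAlgebra ℚ A] [CompleteSpace A]

theorem NormedSpace.exp_neg_mul_exp (a : A) : exp (-a) * exp a = 1 := by
  rw [← exp_add_of_commute (Commute.refl a).neg_left, neg_add_cancel, exp_zero]

theorem NormedSpace.exp_mul_exp_neg (a : A) : exp a * exp (-a) = 1 := by
  rw [← exp_add_of_commute (Commute.refl a).neg_right, add_neg_cancel, exp_zero]

theorem IsSelfAdjoint.exists_isUnit_mul_self_eq_exp [StarRing A] [ContinuousStar A] {a : A}
    (ha : IsSelfAdjoint a) : ∃ v, IsSelfAdjoint v ∧ IsUnit v ∧ v * v = NormedSpace.exp a := by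
  refine ⟨NormedSpace.exp ((2⁻¹ : ℚ) • a), ?_, isUnit_exp _, ?_⟩
  · exact IsSelfAdjoint.exp (by rw [IsSelfAdjoint, star_rat_smul, ha.star_eq])
  · rw [← exp_add_of_commute (Commute.refl _), ← add_smul]
    norm_num

end Exp

theorem stmt_4_general {A : Type*} [NormedRing A] [StarRing A] [CStarRing A]
    [NormedAlgebra ℂ A] [CompleteSpace A]
    (τ : A →L[ℂ] ℂ) (hτ : ∀ x y : A, τ (x * y) = τ (y * x))
    (hpos : ∀ x : A, 0 ≤ τ (star x * x))
    (hfaithful : ∀ x : A, τ (star x * x) = 0 → x = 0)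
    (D : Fin 4 → A →L[ℂ] A)
    (hD : ∀ i, ∀ x y : A, D i (x * y) = D i x * y + x * D i y)
    (hτD : ∀ i, ∀ x : A, τ (D i x) = 0)
    (hDstar : ∀ i, ∀ x : A, D i (star x) = star (D i x))
    (h : A) (hh : IsSelfAdjoint h) :
    let R : A := ((Real.pi : ℂ) ^ 2) • ∑ i : Fin 4,
      (-(NormedSpace.exp (-h) * D i (D i (NormedSpace.exp h)) * NormedSpace.exp (-h))
        + (3/2 : ℂ) • (NormedSpace.exp (-h) * D i (NormedSpace.exp h) * NormedSpace.exp (-h) * D i (NormedSpace.exp h) * NormedSpace.exp (-h)))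
    τ R ≤ 0 ∧ (τ R = 0 ↔ ∀ i : Fin 4, D i (NormedSpace.exp h) = 0) := by
  intro R
  let : NormedAlgebra ℚ A := .restrictScalars ℚ ℂ A
  obtain ⟨v, hv, hv_unit, hvv⟩ := IsSelfAdjoint.exists_isUnit_mul_self_eq_exp hh.neg
  have hDu (i : Fin 4) : IsSelfAdjoint (D i (exp h)) := by
    rw [IsSelfAdjoint, ← hDstar, hh.exp.star_eq]
  set x : Fin 4 → A := fun i ↦ v * D i (exp h) * exp (-h)
  have hτR : τ R = -((Real.pi : ℂ) ^ 2 * 2⁻¹ * ∑ i, τ (star (x i) * x i)) := by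
    simp only [R, x, map_smul, map_sum, smul_eq_mul, (hDu _).star_conj_mul_conj hv hvv,
      trace_curvature_summand (hD _) hτ (hτD _) (exp_neg_mul_exp h) (exp_mul_exp_neg h),
      Finset.sum_neg_distrib, ← Finset.mul_sum]
    ring
  have hx (i : Fin 4) : x i = 0 ↔ D i (exp h) = 0 :=
    ((isUnit_exp (-h)).mul_left_eq_zero).trans hv_unit.mul_right_eq_zero
  have hc : (0 : ℂ) < (Real.pi : ℂ) ^ 2 * 2⁻¹ := by
    have : (Real.pi : ℂ) ^ 2 * 2⁻¹ = ((Real.pi ^ 2 * 2⁻¹ : ℝ) : ℂ) := by push_cast; ring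
    rw [this, Complex.zero_lt_real]
    positivity
  rw [hτR, neg_nonpos, neg_eq_zero, mul_eq_zero, or_iff_right hc.ne',
    Finset.sum_map_star_mul_self_eq_zero_iff hpos hfaithful]
  exact ⟨mul_nonneg hc.le (Finset.sum_nonneg fun i _ ↦ hpos (x i)), by simp [hx]⟩

/-- **Non-positivity of the Einstein–Hilbert action for the Fathizadeh–Khalkhali scalar
curvature on the noncommutative 4-torus.**  For the scalar curvature
`R = π² Σᵢ(−e^{−h}δᵢ²(e^h)e^{−h} + (3/2)e^{−h}δᵢ(e^h)e^{−h}δᵢ(e^h)e^{−h})`,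
the Einstein–Hilbert action `τ(R)` is a nonpositive real number, vanishing iff
`δᵢ(e^h) = 0` for all `i`. -/
theorem stmt_4 {A : Type*} [NormedRing A] [StarRing A] [CStarRing A]
    [NormedAlgebra ℂ A] [CompleteSpace A] [StarModule ℂ A]
    (τ : A →L[ℂ] ℂ) (hτ : ∀ x y : A, τ (x * y) = τ (y * x))
    (hpos : ∀ x : A, 0 ≤ τ (star x * x))
    (hfaithful : ∀ x : A, τ (star x * x) = 0 → x = 0)
    (D : Fin 4 → A →L[ℂ] A)
    (hD : ∀ i, ∀ x y : A, D i (x * y) = D i x * y + x * D i y)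
    (hτD : ∀ i, ∀ x : A, τ (D i x) = 0)
    (hDstar : ∀ i, ∀ x : A, D i (star x) = star (D i x))
    (h : A) (hh : IsSelfAdjoint h) :
    let R : A := ((Real.pi : ℂ) ^ 2) • ∑ i : Fin 4,
      (-(NormedSpace.exp (-h) * D i (D i (NormedSpace.exp h)) * NormedSpace.exp (-h))
        + (3/2 : ℂ) • (NormedSpace.exp (-h) * D i (NormedSpace.exp h) * NormedSpace.exp (-h) * D i (NormedSpace.exp h) * NormedSpace.exp (-h)))
    τ R ≤ 0 ∧ (τ R = 0 ↔ ∀ i : Fin 4, D i (NormedSpace.exp h) = 0) :=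
  stmt_4_general τ hτ hpos hfaithful D hD hτD hDstar h hh
end

section
/- Let A be a unital C*-algebra, τ : A → ℂ a continuous linear tracial functional (τ(xy) = τ(yx)), and ∂ : A → A a continuous ℂ-linear derivation. Let f ∈ A be self-adjoint with τ( f²·(∂f)·(∂f) − f·(∂f)·f·(∂f) ) ≠ 0, and define Ω_f(t) := ½·τ( (∂ e^{−tf/2})·(∂ e^{tf}) + (∂ e^{tf/2})·(∂ e^{tf})·e^{−tf} ) for t ∈ ℝ. Then there exists δ > 0 such that Ω_f(t) ≠ 0 for every real t with 0 < |t| < δ; i.e., the Gauss–Bonnet theorem fails for the metric diag(e^{tf}, 1) for all sufficiently small nonzero t. -/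
/-!
Every factor `∂ e^{a s f}` is `O(s)`, so truncating all the exponentials at order four gives
`Ω_f(s) = s⁴ τ(f²(∂f)² − f(∂f)f(∂f)) / 16 + O(s⁵)` as `s → 0`: the Taylor coefficients of the
product are Cauchy products, and by cyclicity of `τ` those of `s²` and `s³` cancel.
A nonzero leading term `c s⁴` keeps `Ω_f(s)` away from zero for small `s ≠ 0`.
-/

open NormedSpace Asymptotics Filter Topology Finset
open scoped Nat

def cauchyProduct {A : Type*} [Semiring A] (a b : ℕ → A) (k : ℕ) : A :=
  ∑ p ∈ antidiagonal k, a p.1 * b p.2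

def expCoeff {𝕂 A : Type*} [Field 𝕂] [Ring A] [Algebra 𝕂 A] (a : 𝕂) (x : A) (k : ℕ) : A :=
  (a ^ k / k !) • x ^ k

section TaylorExpansion

variable {𝕜 E A : Type*} [NontriviallyNormedField 𝕜]
  [NormedAddCommGroup E] [NormedSpace 𝕜 E] [NormedRing A] [NormedAlgebra 𝕜 A]

def HasTaylorExpansion (F : 𝕜 → E) (c : ℕ → E) (n : ℕ) : Prop :=
  (fun s => F s - ∑ k ∈ range n, s ^ k • c k) =O[𝓝 0] fun s => s ^ n

lemma isBigO_sum_pow_smul_one (c : ℕ → E) (n : ℕ) :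
    (fun s : 𝕜 => ∑ k ∈ range n, s ^ k • c k) =O[𝓝 0] fun _ => (1 : 𝕜) := by
  have : Continuous fun s : 𝕜 => ∑ k ∈ range n, s ^ k • c k := by fun_prop
  exact (this.tendsto 0).isBigO_one 𝕜

lemma isBigO_pow_smul_of_le (c : E) {m n : ℕ} (h : n ≤ m) :
    (fun s : 𝕜 => s ^ m • c) =O[𝓝 0] fun s => s ^ n := by
  have : (fun s : 𝕜 => s ^ m • c) = fun s => s ^ n • (s ^ (m - n) • c) := by
    funext s; rw [smul_smul, ← pow_add, Nat.add_sub_cancel' h]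
  have hc : Continuous fun s : 𝕜 => s ^ (m - n) • c := by fun_prop
  rw [this]
  simpa using (isBigO_refl (fun s : 𝕜 => s ^ n) (𝓝 0)).smul ((hc.tendsto 0).isBigO_one 𝕜)

namespace HasTaylorExpansion

variable {F G : 𝕜 → E} {a b : ℕ → E} {n : ℕ}

lemma isBigO_one (hF : HasTaylorExpansion F a n) : F =O[𝓝 0] fun _ => (1 : 𝕜) := by
  have hpow := ((continuous_pow n).tendsto (0 : 𝕜)).isBigO_one 𝕜
  simpa using (IsBigO.trans hF hpow).add (isBigO_sum_pow_smul_one a n)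

lemma add (hF : HasTaylorExpansion F a n) (hG : HasTaylorExpansion G b n) :
    HasTaylorExpansion (fun s => F s + G s) (fun k => a k + b k) n := by
  refine (IsBigO.add hF hG).congr_left fun s => ?_
  simp only [smul_add, sum_add_distrib]
  abel

lemma map {E' : Type*} [NormedAddCommGroup E'] [NormedSpace 𝕜 E'] (L : E →L[𝕜] E')
    (hF : HasTaylorExpansion F a n) :
    HasTaylorExpansion (fun s => L (F s)) (fun k => L (a k)) n := by
  refine ((L.isBigO_comp _ _).trans hF).congr_left fun s => ?_
  simp [map_sum, map_smul]

end HasTaylorExpansion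

lemma isBigO_sum_mul_sum_sub_sum_cauchyProduct (a b : ℕ → A) (n : ℕ) :
    (fun s : 𝕜 => (∑ i ∈ range n, s ^ i • a i) * (∑ j ∈ range n, s ^ j • b j)
      - ∑ k ∈ range n, s ^ k • cauchyProduct a b k) =O[𝓝 0] fun s => s ^ n := by
  have hdiag (s : 𝕜) : ∑ k ∈ range n, s ^ k • cauchyProduct a b k
      = ∑ i ∈ range n, ∑ j ∈ range (n - i), s ^ (i + j) • (a i * b j) := by
    simp_rw [cauchyProduct, smul_sum, Nat.sum_antidiagonal_eq_sum_range_succ_mk]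
    rw [← sum_range_diag_flip n fun i j => s ^ (i + j) • (a i * b j)]
    refine sum_congr rfl fun k _ => sum_congr rfl fun i hi => ?_
    rw [Nat.add_sub_cancel' (Nat.lt_succ_iff.mp (mem_range.mp hi))]
  have htail (s : 𝕜) : (∑ i ∈ range n, s ^ i • a i) * (∑ j ∈ range n, s ^ j • b j)
      - ∑ k ∈ range n, s ^ k • cauchyProduct a b k
      = ∑ i ∈ range n, ∑ j ∈ Ico (n - i) n, s ^ (i + j) • (a i * b j) := by
    rw [hdiag, sum_mul_sum, ← sum_sub_distrib]
    refine sum_congr rfl fun i _ => ?_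
    simp_rw [smul_mul_smul_comm, ← pow_add]
    rw [← sum_range_add_sum_Ico _ (Nat.sub_le n i), add_sub_cancel_left]
  simp_rw [htail]
  refine IsBigO.fun_sum fun i _ => IsBigO.fun_sum fun j hj => isBigO_pow_smul_of_le _ ?_
  have := (mem_Ico.mp hj).1
  omega

lemma HasTaylorExpansion.mul {F G : 𝕜 → A} {a b : ℕ → A} {n : ℕ}
    (hF : HasTaylorExpansion F a n) (hG : HasTaylorExpansion G b n) :
    HasTaylorExpansion (fun s => F s * G s) (cauchyProduct a b) n := by
  have h₁ : (fun s => (F s - ∑ k ∈ range n, s ^ k • a k) * G s) =O[𝓝 0] fun s => s ^ n := by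
    simpa using IsBigO.mul hF hG.isBigO_one
  have h₂ : (fun s => (∑ k ∈ range n, s ^ k • a k) * (G s - ∑ k ∈ range n, s ^ k • b k))
      =O[𝓝 0] fun s => s ^ n := by
    simpa using IsBigO.mul (isBigO_sum_pow_smul_one a n) hG
  refine ((h₁.add h₂).add (isBigO_sum_mul_sum_sub_sum_cauchyProduct a b n)).congr_left
    fun s => ?_
  noncomm_ring

lemma eventually_ne_zero_of_isBigO_sub_pow_smul {F : 𝕜 → E} {c : E} (hc : c ≠ 0) {m : ℕ}
    (h : (fun s => F s - s ^ m • c) =O[𝓝 0] fun s => s ^ (m + 1)) :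
    ∀ᶠ s in 𝓝 0, s ≠ 0 → F s ≠ 0 := by
  have hc' : 0 < ‖c‖ := norm_pos_iff.2 hc
  filter_upwards [(h.trans_isLittleO (isLittleO_pow_pow m.lt_succ_self)).def (half_pos hc')]
    with s hs hs0 hF
  rw [hF, zero_sub, norm_neg, norm_smul] at hs
  nlinarith [norm_pos_iff.2 (pow_ne_zero m hs0)]

end TaylorExpansion

lemma hasTaylorExpansion_exp_smul {𝕂 A : Type*} [RCLike 𝕂] [NormedRing A] [NormedAlgebra 𝕂 A]
    [CompleteSpace A] (a : 𝕂) (x : A) (n : ℕ) :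
    HasTaylorExpansion (fun s : 𝕂 => exp ((a * s) • x)) (expCoeff a x) n := by
  have hexp := (hasFPowerSeriesAt_exp_zero_of_radius_pos (𝕂 := 𝕂) (𝔸 := A)
    (by simp [expSeries_radius_eq_top])).isBigO_sub_partialSum_pow n
  have hlin : Tendsto (fun s : 𝕂 => (a * s) • x) (𝓝 0) (𝓝 0) := by
    have : Continuous fun s : 𝕂 => (a * s) • x := by fun_prop
    simpa using this.tendsto 0
  have hnorm : (fun s : 𝕂 => ‖(a * s) • x‖ ^ n) =O[𝓝 0] fun s => s ^ n := by
    refine IsBigO.of_bound (‖a‖ ^ n * ‖x‖ ^ n) (Eventually.of_forall fun s => le_of_eq ?_)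
    simp only [norm_smul, norm_mul, norm_pow, mul_pow, Real.norm_eq_abs, abs_norm]
    ring
  refine ((hexp.comp_tendsto hlin).trans hnorm).congr_left fun s => ?_
  simp only [FormalMultilinearSeries.partialSum, expSeries_apply_eq, expCoeff, smul_pow, smul_smul,
    mul_pow, zero_add, Function.comp_apply]
  exact congrArg _ (sum_congr rfl fun k _ => congrArg (· • x ^ k) (by ring))

section GaussBonnet

variable {A : Type*}

lemma sum_range_five_smul_trace_cauchyProduct_expCoeff {𝕂 : Type*} [Field 𝕂] [CharZero 𝕂]
    [Ring A] [Algebra 𝕂 A] {T L : Type*} [FunLike T A 𝕂] [LinearMapClass T 𝕂 A 𝕂]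
    [FunLike L A A] [LinearMapClass L 𝕂 A A] (τ : T) (hτ : ∀ x y : A, τ (x * y) = τ (y * x))
    (D : L) (hD : ∀ x y : A, D (x * y) = D x * y + x * D y) (f : A) (s : 𝕂) :
    ∑ k ∈ range 5, s ^ k • τ
      (cauchyProduct (fun k => D (expCoeff (-1/2 : 𝕂) f k)) (fun k => D (expCoeff (1 : 𝕂) f k)) k
        + cauchyProduct (cauchyProduct (fun k => D (expCoeff (1/2 : 𝕂) f k))
            (fun k => D (expCoeff (1 : 𝕂) f k))) (expCoeff (-1 : 𝕂) f) k)
    = s ^ 4 • (τ (f * f * D f * D f - f * D f * (f * D f)) / 8) := by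
  have hD1 : D 1 = 0 := by simpa using hD 1 1
  simp only [sum_range_succ, sum_range_zero, cauchyProduct, Nat.sum_antidiagonal_succ,
    Nat.antidiagonal_zero, sum_singleton, zero_add]
  norm_num [expCoeff, Nat.factorial, pow_succ, hD, hD1]
  set u := D f
  -- Cyclicity reduces every trace monomial to `τ(f u u)`, `τ(f f u u)` or `τ(f u f u)`.
  have tr_uuf : τ (u * (u * f)) = τ (f * (u * u)) := by simpa only [mul_assoc] using hτ (u * u) f
  have tr_ufu : τ (u * (f * u)) = τ (f * (u * u)) := by simpa only [mul_assoc] using hτ u (f * u)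
  have tr_uuff : τ (u * (u * (f * f))) = τ (f * (f * (u * u))) := by
    simpa only [mul_assoc] using hτ (u * u) (f * f)
  have tr_uffu : τ (u * (f * (f * u))) = τ (f * (f * (u * u))) := by
    simpa only [mul_assoc] using hτ u (f * f * u)
  have tr_fuuf : τ (f * (u * (u * f))) = τ (f * (f * (u * u))) := by
    simpa only [mul_assoc] using hτ (f * u * u) f
  have tr_ufuf : τ (u * (f * (u * f))) = τ (f * (u * (f * u))) := by
    simpa only [mul_assoc] using hτ u (f * u * f)
  simp only [map_add, map_neg, map_smul, mul_add, add_mul, smul_mul_assoc, mul_smul_comm,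
    smul_add, smul_eq_mul, mul_assoc, neg_mul, mul_neg, tr_uuf, tr_ufu, tr_uuff, tr_uffu, tr_fuuf,
    tr_ufuf]
  ring

variable [NormedRing A] [NormedAlgebra ℂ A] [CompleteSpace A]

noncomputable def gaussBonnetTrace (τ : A →L[ℂ] ℂ) (D : A →L[ℂ] A) (f : A) (s : ℂ) : ℂ :=
  (1/2 : ℂ) * τ (D (exp ((-s/2) • f)) * D (exp (s • f))
    + D (exp ((s/2) • f)) * D (exp (s • f)) * exp ((-s) • f))

lemma isBigO_gaussBonnetTrace_sub (τ : A →L[ℂ] ℂ) (hτ : ∀ x y : A, τ (x * y) = τ (y * x))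
    (D : A →L[ℂ] A) (hD : ∀ x y : A, D (x * y) = D x * y + x * D y) (f : A) :
    (fun s => gaussBonnetTrace τ D f s - s ^ 4 • (τ (f * f * D f * D f - f * D f * (f * D f)) / 16))
      =O[𝓝 0] fun s => s ^ 5 := by
  have hX := (hasTaylorExpansion_exp_smul (-1/2 : ℂ) f 5).map D
  have hY := (hasTaylorExpansion_exp_smul (1 : ℂ) f 5).map D
  have hZ := (hasTaylorExpansion_exp_smul (1/2 : ℂ) f 5).map D
  have hW := hasTaylorExpansion_exp_smul (-1 : ℂ) f 5
  have h := ((hX.mul hY).add ((hZ.mul hY).mul hW)).map τ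
  refine (h.const_mul_left (1/2 : ℂ)).congr_left fun s => ?_
  dsimp only
  rw [sum_range_five_smul_trace_cauchyProduct_expCoeff τ hτ D hD f s]
  simp only [gaussBonnetTrace, one_mul, neg_one_mul, show (-1/2 : ℂ) * s = -s/2 by ring,
    show (1/2 : ℂ) * s = s/2 by ring, smul_eq_mul]
  ring

end GaussBonnet

theorem stmt_18_general {A : Type*} [NormedRing A]
    [NormedAlgebra ℂ A] [CompleteSpace A]
    (τ : A →L[ℂ] ℂ) (hτ : ∀ x y : A, τ (x * y) = τ (y * x))
    (D : A →L[ℂ] A) (hD : ∀ x y : A, D (x * y) = D x * y + x * D y)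
    (f : A)
    (hne : τ (f * f * D f * D f - f * D f * (f * D f)) ≠ 0) :
    ∃ δ : ℝ, 0 < δ ∧ ∀ t : ℝ, 0 < |t| → |t| < δ →
      (1/2 : ℂ) * τ (D (exp ((-(t : ℂ)/2) • f)) * D (exp ((t : ℂ) • f))
        + D (exp (((t : ℂ)/2) • f)) * D (exp ((t : ℂ) • f)) * exp ((-(t : ℂ)) • f))
        ≠ 0 := by
  obtain ⟨δ, hδ, hΩ⟩ := Metric.eventually_nhds_iff.1 <| eventually_ne_zero_of_isBigO_sub_pow_smul
    (div_ne_zero hne (by norm_num)) (isBigO_gaussBonnetTrace_sub τ hτ D hD f)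
  refine ⟨δ, hδ, fun t ht htδ => hΩ ?_ ?_⟩
  · simpa using htδ
  · exact_mod_cast abs_pos.1 ht

/-- **Failure of the Gauss–Bonnet theorem under perturbation.**
If the self-adjoint element `f` satisfies `τ(f²(∂f)² − f(∂f)f(∂f)) ≠ 0`, then the
Gauss–Bonnet trace `Ω_f(t)` of the metric `diag(e^{tf}, 1)` is nonzero for all
sufficiently small nonzero real `t`. -/
theorem stmt_18 {A : Type*} [NormedRing A] [StarRing A] [CStarRing A]
    [NormedAlgebra ℂ A] [CompleteSpace A] [StarModule ℂ A]
    (τ : A →L[ℂ] ℂ) (hτ : ∀ x y : A, τ (x * y) = τ (y * x))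
    (D : A →L[ℂ] A) (hD : ∀ x y : A, D (x * y) = D x * y + x * D y)
    (f : A) (hf : IsSelfAdjoint f)
    (hne : τ (f * f * D f * D f - f * D f * (f * D f)) ≠ 0) :
    ∃ δ : ℝ, 0 < δ ∧ ∀ t : ℝ, 0 < |t| → |t| < δ →
      (1/2 : ℂ) * τ (D (exp ((-(t : ℂ)/2) • f)) * D (exp ((t : ℂ) • f))
        + D (exp (((t : ℂ)/2) • f)) * D (exp ((t : ℂ) • f)) * exp ((-(t : ℂ)) • f))
        ≠ 0 :=
  stmt_18_general τ hτ D hD f hne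
end
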